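/- A Boolean function f is self-dual (f(a) = 1 − f(ā) for all a) if and only if f is odd (its Zhegalkin polynomial has an odd number of nonconstant monomials) and its characteristic rank is at most 1. -/
import Mathlib

/-- A Boolean function of arity `n`. -/
abbrev Bf (n : ℕ) := (Fin n → ZMod 2) → ZMod 2

/-- The Zhegalkin coefficient of the monomial `x_S` of `f`, via Möbius inversion. -/
def zCoeff {n : ℕ} (f : Bf n) (S : Finset (Fin n)) : ZMod 2 :=
  ∑ T ∈ S.powerset, f fun i => if i ∈ T then 1 else 0

/-- The set of monomials of the Zhegalkin polynomial of `f`. -/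
def monomials {n : ℕ} (f : Bf n) : Finset (Finset (Fin n)) :=
  Finset.univ.filter fun S => zCoeff f S = 1
/-- The inner negation `f^n(a) = f(ā)`. -/
def innerNeg {n : ℕ} (f : Bf n) : Bf n := fun a => f fun i => a i + 1

/-- The number of monomials of `f` properly containing `S`; the characteristic
`Char(S, f)` is its parity. -/
def charCount {n : ℕ} (f : Bf n) (S : Finset (Fin n)) : ℕ :=
  ((monomials f).filter fun A => S ⊂ A).card

/-- The characteristic rank of `f` is at most `m`: `Char(S, f) = 0` for all
`S` with `|S| ≥ m`. -/
def CharRankLE {n : ℕ} (f : Bf n) (m : ℕ) : Prop :=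
  ∀ S : Finset (Fin n), m ≤ S.card → Even (charCount f S)

open Finset

section helpers
variable {n : ℕ}

lemma zmod2_em (x : ZMod 2) : x = 0 ∨ x = 1 := by revert x; decide

/-- indicator vector -/
def chi (S : Finset (Fin n)) : Fin n → ZMod 2 := fun i => if i ∈ S then 1 else 0

lemma eq_chi (a : Fin n → ZMod 2) : a = chi (univ.filter fun i => a i = 1) := by
  funext i
  simp only [chi, mem_filter, mem_univ, true_and]
  rcases zmod2_em (a i) with h | h <;> simp [h]

lemma chi_compl (S : Finset (Fin n)) : (fun i => chi S i + 1) = chi Sᶜ := by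
  funext i
  by_cases h : i ∈ S <;>
    simp [chi, h, show (1:ZMod 2) + 1 = 0 from rfl]

lemma two_pow_zmod (k : ℕ) : ((2 ^ k : ℕ) : ZMod 2) = if k = 0 then 1 else 0 := by
  induction k with
  | zero => simp
  | succ m ih =>
    rw [if_neg (Nat.succ_ne_zero m), pow_succ, Nat.cast_mul,
      show ((2:ℕ):ZMod 2) = 0 from rfl, mul_zero]

lemma natCast_zmod2_eq_zero_iff (k : ℕ) : (k : ZMod 2) = 0 ↔ Even k := by
  rw [ZMod.natCast_eq_zero_iff, Nat.dvd_iff_mod_eq_zero, ← Nat.even_iff]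

lemma natCast_zmod2_eq_one_iff (k : ℕ) : (k : ZMod 2) = 1 ↔ Odd k := by
  rw [← Nat.not_even_iff_odd, ← natCast_zmod2_eq_zero_iff]
  rcases zmod2_em (k : ZMod 2) with h | h <;> simp [h]

/-- parity of Icc card in ZMod 2 -/
lemma icc_card_zmod (U S : Finset (Fin n)) (h : U ⊆ S) :
    ((Finset.Icc U S).card : ZMod 2) = if U = S then 1 else 0 := by
  rw [Finset.card_Icc_finset h, two_pow_zmod]
  congr 1
  simp only [Nat.sub_eq_zero_iff_le, eq_iff_iff]
  exact ⟨fun hle => h.antisymm (by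
    exact (eq_of_subset_of_card_le h hle).ge), fun he => by rw [he]⟩

/-- Möbius inversion: summing all Zhegalkin coefficients over a powerset recovers `f`. -/
lemma sum_zCoeff (f : Bf n) (S : Finset (Fin n)) :
    ∑ T ∈ S.powerset, zCoeff f T = f (chi S) := by
  calc ∑ T ∈ S.powerset, zCoeff f T
      = ∑ T ∈ S.powerset, ∑ U ∈ S.powerset, if U ⊆ T then f (chi U) else 0 := by
        refine Finset.sum_congr rfl fun T hT => ?_
        rw [mem_powerset] at hT
        rw [zCoeff]
        have hpow : T.powerset = S.powerset.filter (fun U => U ⊆ T) := by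
          ext U
          simp only [mem_powerset, mem_filter]
          exact ⟨fun h => ⟨h.trans hT, h⟩, fun h => h.2⟩
        rw [hpow, sum_filter]
        rfl
    _ = ∑ U ∈ S.powerset, ∑ T ∈ S.powerset, if U ⊆ T then f (chi U) else 0 :=
        Finset.sum_comm
    _ = ∑ U ∈ S.powerset, if U = S then f (chi U) else 0 := by
        refine Finset.sum_congr rfl fun U hU => ?_
        rw [mem_powerset] at hU
        rw [← sum_filter, sum_const, ← Finset.Icc_eq_filter_powerset, nsmul_eq_mul,
          icc_card_zmod U S hU]
        split <;> simp
    _ = f (chi S) := by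
        rw [Finset.sum_ite_eq' S.powerset S (fun U => f (chi U))]
        simp

lemma zCoeff_innerNeg (f : Bf n) (T : Finset (Fin n)) :
    zCoeff (innerNeg f) T = ∑ V ∈ univ.filter (fun V => T ⊆ V), zCoeff f V := by
  calc zCoeff (innerNeg f) T
      = ∑ U ∈ T.powerset, f (chi Uᶜ) := by
        rw [zCoeff]
        refine Finset.sum_congr rfl fun U _ => ?_
        show f _ = _
        rw [show (fun i => (if i ∈ U then (1:ZMod 2) else 0) + 1) = fun i => chi U i + 1 from rfl,
          chi_compl]
    _ = ∑ U ∈ T.powerset, ∑ V ∈ univ, if V ⊆ Uᶜ then zCoeff f V else 0 := by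
        refine Finset.sum_congr rfl fun U _ => ?_
        rw [← sum_zCoeff f Uᶜ]
        have : (Uᶜ : Finset (Fin n)).powerset = univ.filter (fun V => V ⊆ Uᶜ) := by
          ext V; simp
        rw [this, sum_filter]
    _ = ∑ V ∈ univ, ∑ U ∈ T.powerset, if V ⊆ Uᶜ then zCoeff f V else 0 :=
        Finset.sum_comm
    _ = ∑ V ∈ univ, if T ⊆ V then zCoeff f V else 0 := by
        refine Finset.sum_congr rfl fun V _ => ?_
        rw [← sum_filter, sum_const]
        have hfil : T.powerset.filter (fun U => V ⊆ Uᶜ) = (T \ V).powerset := by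
          ext U
          simp only [mem_filter, mem_powerset, subset_sdiff]
          constructor
          · rintro ⟨h1, h2⟩
            exact ⟨h1, disjoint_left.mpr fun a haU haV => (mem_compl.mp (h2 haV)) haU⟩
          · rintro ⟨h1, h2⟩
            exact ⟨h1, fun a haV => mem_compl.mpr fun haU => (disjoint_left.mp h2 haU) haV⟩
        rw [hfil, card_powerset, nsmul_eq_mul, two_pow_zmod]
        by_cases hTV : T ⊆ V
        · rw [if_pos (by rwa [card_eq_zero, sdiff_eq_empty_iff_subset]),
            if_pos hTV, one_mul]
        · rw [if_neg (by rwa [card_eq_zero, sdiff_eq_empty_iff_subset]),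
            if_neg hTV, zero_mul]
    _ = _ := by rw [sum_filter]

lemma sum_zmod_eq_card {α : Type*} [DecidableEq α] (s : Finset α) (g : α → ZMod 2) :
    ∑ v ∈ s, g v = ((s.filter (fun v => g v = 1)).card : ZMod 2) := by
  rw [← Finset.sum_boole]
  refine Finset.sum_congr rfl fun v _ => ?_
  rcases zmod2_em (g v) with h | h <;> simp [h]

/-- Char(T,f) as element of ZMod 2 -/
lemma charCount_cast (f : Bf n) (T : Finset (Fin n)) :
    ((charCount f T : ℕ) : ZMod 2)
      = ∑ V ∈ univ.filter (fun V => T ⊂ V), zCoeff f V := by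
  have hset : (univ.filter (fun V => T ⊂ V)).filter (fun V => zCoeff f V = 1)
      = (monomials f).filter (fun A => T ⊂ A) := by
    ext A
    simp [monomials, and_comm]
  rw [sum_zmod_eq_card, hset, charCount]

lemma coeff_add_innerNeg (f : Bf n) (T : Finset (Fin n)) :
    zCoeff f T + zCoeff (innerNeg f) T = ((charCount f T : ℕ) : ZMod 2) := by
  rw [zCoeff_innerNeg, charCount_cast]
  have hsplit : univ.filter (fun V => T ⊆ V)
      = insert T (univ.filter (fun V => T ⊂ V)) := by
    ext V
    simp only [mem_filter, mem_univ, true_and, mem_insert]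
    constructor
    · intro h
      rcases eq_or_ne V T with rfl | hne
      · exact Or.inl rfl
      · exact Or.inr (lt_of_le_of_ne h (Ne.symm hne))
    · rintro (rfl | h)
      · exact Subset.refl _
      · exact h.subset
  rw [hsplit, sum_insert (by simp only [mem_filter, mem_univ, true_and]; exact fun h => lt_irrefl T h)]
  rw [← add_assoc, CharTwo.add_self_eq_zero, zero_add]

end helpers

/-- A Boolean function is self-dual iff it is odd and has characteristic rank
at most `1`. -/
theorem selfDual_iff_odd_and_charRank_le_one {n : ℕ} (f : Bf n) :
    (∀ a, f a + f (fun i => a i + 1) = 1) ↔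
    (Odd ((monomials f).erase ∅).card ∧ CharRankLE f 1) := by
  have key : (∀ a, f a + f (fun i => a i + 1) = 1) ↔
      (∀ T : Finset (Fin n), ((charCount f T : ℕ) : ZMod 2)
        = if T = ∅ then 1 else 0) := by
    constructor
    · intro h T
      rw [← coeff_add_innerNeg]
      have : zCoeff f T + zCoeff (innerNeg f) T
          = ∑ U ∈ T.powerset, (1 : ZMod 2) := by
        rw [zCoeff, zCoeff, ← Finset.sum_add_distrib]
        exact Finset.sum_congr rfl fun U _ => h _
      rw [this, Finset.sum_const, nsmul_eq_mul, mul_one, card_powerset,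
        two_pow_zmod]
      rcases eq_or_ne T ∅ with rfl | hne
      · simp
      · rw [if_neg (by simpa [card_eq_zero] using hne), if_neg hne]
    · intro h a
      have ha := eq_chi a
      rw [ha]
      show f (chi _) + innerNeg f (chi _) = 1
      set S := univ.filter fun i => a i = 1
      rw [← sum_zCoeff f S, ← sum_zCoeff (innerNeg f) S, ← Finset.sum_add_distrib]
      calc ∑ T ∈ S.powerset, (zCoeff f T + zCoeff (innerNeg f) T)
          = ∑ T ∈ S.powerset, if T = ∅ then (1 : ZMod 2) else 0 := by
            refine Finset.sum_congr rfl fun T _ => ?_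
            rw [coeff_add_innerNeg, h T]
        _ = 1 := by
            rw [Finset.sum_ite_eq' S.powerset ∅ (fun _ => (1 : ZMod 2))]
            simp
  rw [key]
  constructor
  · intro h
    constructor
    · have h0 := h ∅
      rw [if_pos rfl] at h0
      rw [natCast_zmod2_eq_one_iff] at h0
      have : charCount f ∅ = ((monomials f).erase ∅).card := by
        rw [charCount]
        congr 1
        ext A
        simp [Finset.empty_ssubset, nonempty_iff_ne_empty, and_comm]
      rwa [this] at h0
    · intro S hS
      have hne : S ≠ ∅ := by
        intro hSe; rw [hSe] at hS; simp at hS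
      have := h S
      rw [if_neg hne, natCast_zmod2_eq_zero_iff] at this
      exact this
  · rintro ⟨hodd, hrank⟩ T
    rcases eq_or_ne T ∅ with rfl | hne
    · rw [if_pos rfl, natCast_zmod2_eq_one_iff]
      have : charCount f ∅ = ((monomials f).erase ∅).card := by
        rw [charCount]
        congr 1
        ext A
        simp [Finset.empty_ssubset, nonempty_iff_ne_empty, and_comm]
      rwa [this]
    · rw [if_neg hne, natCast_zmod2_eq_zero_iff]
      exact hrank T (by
        rwa [Nat.one_le_iff_ne_zero, ← Nat.pos_iff_ne_zero, card_pos,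
          nonempty_iff_ne_empty])
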